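/- The function z ↦ j(−z²; q¹²) · ( m(−q⁸, −z²; q¹²) − m(−q⁴, −z²; q¹²) ), defined for complex z in a punctured neighborhood of i with z² ∉ q^ℤ ∪ (−q^ℤ) (so that all the theta and Appell functions appearing are defined), tends to 0 as z → i; likewise the function z ↦ j(−z²; q¹²) · ( m(−q¹⁰, −z²; q¹²) − m(−q², −z²; q¹²) ) tends to 0 as z → i. -/

import Mathlib

open scoped BigOperators

noncomputable section

/-- Infinite q-Pochhammer symbol `(x;Q)_∞ = ∏_{i≥0} (1 - Q^i x)`. -/
def qPochInf (x Q : ℂ) : ℂ := ∏' i : ℕ, (1 - Q ^ i * x)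

/-- Finite q-Pochhammer symbol `(x;Q)_n = ∏_{i=0}^{n-1} (1 - Q^i x)`. -/
def qPochFin (x Q : ℂ) (n : ℕ) : ℂ := ∏ i ∈ Finset.range n, (1 - Q ^ i * x)

/-- Theta function `j(x;Q) = (x;Q)_∞ (Q/x;Q)_∞ (Q;Q)_∞`. -/
def jtheta (x Q : ℂ) : ℂ := qPochInf x Q * qPochInf (Q / x) Q * qPochInf Q Q

/-- `J_a = (q^a;q^a)_∞`. -/
def Jq (a : ℕ) (q : ℂ) : ℂ := qPochInf (q ^ a) (q ^ a)

/-- `J_{a,b} = j(q^a;q^b)`. -/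
def Jab (a b : ℕ) (q : ℂ) : ℂ := jtheta (q ^ a) (q ^ b)

/-- `J̄_{a,b} = j(-q^a;q^b)`. -/
def Jbarab (a b : ℕ) (q : ℂ) : ℂ := jtheta (-q ^ a) (q ^ b)

/-- Single term of the Hecke-type double sum. -/
def heckeTerm (a b c : ℤ) (x y Q : ℂ) (r s : ℤ) : ℂ :=
  (-1) ^ (r + s) * x ^ r * y ^ s *
    Q ^ (a * (r * (r - 1) / 2) + b * r * s + c * (s * (s - 1) / 2))

/-- Hecke-type double sum `f_{a,b,c}(x,y;q)`. -/
def heckeF (a b c : ℤ) (x y Q : ℂ) : ℂ :=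
  (∑' rs : ℕ × ℕ, heckeTerm a b c x y Q rs.1 rs.2) -
    ∑' rs : ℕ × ℕ, heckeTerm a b c x y Q (-(rs.1 : ℤ) - 1) (-(rs.2 : ℤ) - 1)

/-- Normalized admissible string function `𝒞^{(p,p′)}_{m,ℓ}(q)`, defined so that
`(q;q)_∞³ 𝒞 = f_{1,p′,2pp′}(q^{1+(m+ℓ)/2}, -q^{p(p′+ℓ+1)};q) - f_{1,p′,2pp′}(q^{(m-ℓ)/2}, -q^{p(p′-ℓ-1)};q)`. -/
def strC (p p' m ℓ : ℤ) (q : ℂ) : ℂ :=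
  (heckeF 1 p' (2 * p * p') (q ^ (1 + (m + ℓ) / 2)) (-q ^ (p * (p' + ℓ + 1))) q -
      heckeF 1 p' (2 * p * p') (q ^ ((m - ℓ) / 2)) (-q ^ (p * (p' - ℓ - 1))) q) /
    qPochInf q q ^ 3

/-- Admissible string function with its fractional power prefactor,
`C^{(p,p′)}_{m,ℓ}(q) = q^{-1/8 + p(ℓ+1)²/(4p′) - p m²/(4(p′-2p))} 𝒞^{(p,p′)}_{m,ℓ}(q)`. -/
def strCpre (p p' m ℓ : ℤ) (q : ℝ) : ℂ :=
  ((q ^ ((-1 / 8 : ℝ) + (p : ℝ) * ((ℓ : ℝ) + 1) ^ 2 / (4 * (p' : ℝ)) -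
      (p : ℝ) * (m : ℝ) ^ 2 / (4 * ((p' : ℝ) - 2 * (p : ℝ)))) : ℝ) : ℂ) *
    strC p p' m ℓ (q : ℂ)

/-- Appell function `m(x,z;Q)`. -/
def appell (x z Q : ℂ) : ℂ :=
  (1 / jtheta z Q) *
    ∑' r : ℤ, ((-1) ^ r * Q ^ (r * (r - 1) / 2) * z ^ r) / (1 - Q ^ (r - 1) * x * z)

/-- Theta function `Θ_{n,m}(z;q) = ∑_{t ∈ ℤ + n/(2m)} q^{m t²} z^{-m t}`. -/
def bigTheta (n m : ℤ) (z : ℂ) (q : ℝ) : ℂ :=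
  ∑' k : ℤ, ((q ^ ((m : ℝ) * ((k : ℝ) + (n : ℝ) / (2 * (m : ℝ))) ^ 2) : ℝ) : ℂ) *
    z ^ (-((m : ℂ) * ((k : ℂ) + (n : ℂ) / (2 * (m : ℂ)))))

/-- Admissible character `χ_ℓ^{(p,p′)}(z;q)`. -/
def adChar (p p' ℓ : ℤ) (z : ℂ) (q : ℝ) : ℂ :=
  (bigTheta (ℓ + 1) p' z (q ^ p) - bigTheta (-(ℓ + 1)) p' z (q ^ p)) /
    (bigTheta 1 2 z q - bigTheta (-1) 2 z q)

/-- Ramanujan's third-order mock theta function `f₃`. -/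
def mockf3 (x : ℂ) : ℂ := ∑' n : ℕ, x ^ (n ^ 2) / qPochFin (-x) x n ^ 2

/-- Ramanujan's third-order mock theta function `ω₃`. -/
def mockomega3 (x : ℂ) : ℂ := ∑' n : ℕ, x ^ (2 * n * (n + 1)) / qPochFin x (x ^ 2) (n + 1) ^ 2

/-- Ramanujan's tenth-order mock theta function `φ₁₀`. -/
def mockphi10 (x : ℂ) : ℂ := ∑' n : ℕ, x ^ (n * (n + 1) / 2) / qPochFin x (x ^ 2) (n + 1)

/-- Ramanujan's tenth-order mock theta function `ψ₁₀`. -/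
def mockpsi10 (x : ℂ) : ℂ := ∑' n : ℕ, x ^ ((n + 1) * (n + 2) / 2) / qPochFin x (x ^ 2) (n + 1)

/-- Ramanujan's tenth-order mock theta function `X₁₀`. -/
def mockX10 (x : ℂ) : ℂ := ∑' n : ℕ, (-1) ^ n * x ^ (n ^ 2) / qPochFin (-x) x (2 * n)

/-- Ramanujan's tenth-order mock theta function `χ₁₀`. -/
def mockchi10 (x : ℂ) : ℂ := ∑' n : ℕ, (-1) ^ n * x ^ ((n + 1) ^ 2) / qPochFin (-x) x (2 * n + 1)

/-- Ramanujan's second-order mock theta function `A₂`. -/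
def mockA2 (x : ℂ) : ℂ :=
  ∑' n : ℕ, x ^ (n + 1) * qPochFin (-x ^ 2) (x ^ 2) n / qPochFin x (x ^ 2) (n + 1)

/-- Ramanujan's second-order mock theta function `μ₂`. -/
def mockmu2 (x : ℂ) : ℂ :=
  ∑' n : ℕ, (-1) ^ n * x ^ (n ^ 2) * qPochFin x (x ^ 2) n / qPochFin (-x ^ 2) (x ^ 2) n ^ 2

/-!
Writing `m(x,u;Q) = S(x,u;Q) / j(u;Q)`, the product `j(u;Q) (m(x,u;Q) - m(y,u;Q))` equals
`S(x,u;Q) - S(y,u;Q)` wherever `j(u;Q) ≠ 0`. For `0 < Q < 1` and negative real `x`, `y` the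
denominators `1 - Q^(r-1) x u` have norm at least `1` near `u = 1`, so the series converge
locally uniformly and this difference is continuous at `u = 1`. When `x y = Q`, the reflection
`r ↦ 1 - r` gives `S(y,1;Q) = S(x,1;Q) + ∑ (-1)^r Q^(r(r-1)/2)`, and the last sum vanishes since
the same reflection negates its terms. Take `u = -z²`, `Q = q¹²` and `(x, y) = (-q⁸, -q⁴)` or
`(-q¹⁰, -q²)`.
-/

open Filter Topology

theorem qPochInf_ne_zero {x Q : ℂ} (hQ : ‖Q‖ < 1) (hx : ∀ i : ℕ, Q ^ i * x ≠ 1) :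
    qPochInf x Q ≠ 0 := by
  have hsum : Summable fun i : ℕ => ‖-(Q ^ i * x)‖ := by
    simpa [norm_pow] using (summable_geometric_of_lt_one (norm_nonneg Q) hQ).mul_right ‖x‖
  have hfac : ∀ i : ℕ, 1 + -(Q ^ i * x) ≠ 0 := fun i h => hx i (by linear_combination -h)
  simpa only [qPochInf, sub_eq_add_neg] using tprod_one_add_ne_zero_of_summable hfac hsum

theorem jtheta_ne_zero {x Q : ℂ} (hQ : ‖Q‖ < 1) (hx : ∀ n : ℤ, x ≠ Q ^ n) : jtheta x Q ≠ 0 := by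
  have hfac₁ : ∀ i : ℕ, Q ^ i * x ≠ 1 := fun i h => hx (-i) <| by
    rw [zpow_neg, zpow_natCast]; exact eq_inv_of_mul_eq_one_right h
  have hfac₂ : ∀ i : ℕ, Q ^ i * (Q / x) ≠ 1 := fun i h => hx (i + 1) <| by
    have hx0 : x ≠ 0 := by rintro rfl; simp at h
    rw [← mul_div_assoc, ← pow_succ, div_eq_one_iff_eq hx0] at h
    rw [← h]; norm_cast
  have hfac₃ : ∀ i : ℕ, Q ^ i * Q ≠ 1 := fun i h => by
    have : ‖Q ^ i * Q‖ < 1 := by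
      rw [← pow_succ, norm_pow]; exact pow_lt_one₀ (norm_nonneg _) hQ i.succ_ne_zero
    simp [h] at this
  exact mul_ne_zero (mul_ne_zero (qPochInf_ne_zero hQ hfac₁) (qPochInf_ne_zero hQ hfac₂))
    (qPochInf_ne_zero hQ hfac₃)

def appellTerm (x z Q : ℂ) (r : ℤ) : ℂ :=
  (-1) ^ r * Q ^ (r * (r - 1) / 2) * z ^ r / (1 - Q ^ (r - 1) * x * z)

theorem jtheta_mul_appell_sub {x y z Q : ℂ} (hz : jtheta z Q ≠ 0) :
    jtheta z Q * (appell x z Q - appell y z Q) =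
      ∑' r, appellTerm x z Q r - ∑' r, appellTerm y z Q r := by
  rw [appell, appell, ← mul_sub, ← mul_assoc, mul_one_div_cancel hz, one_mul]
  rfl

theorem mul_sub_one_self_nonneg (m : ℤ) : 0 ≤ m * (m - 1) := by
  rcases le_or_gt m 0 with h | h <;> nlinarith

theorem mul_natAbs_sub_sq_le_triangle (k r : ℤ) : k * r.natAbs - k ^ 2 ≤ r * (r - 1) / 2 := by
  rw [Int.le_ediv_iff_mul_le two_pos]
  have ha : (r.natAbs : ℤ) ^ 2 = r ^ 2 := Int.natAbs_sq r
  have hr : r ≤ r.natAbs := Int.le_natAbs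
  nlinarith [mul_sub_one_self_nonneg (r.natAbs - k), mul_sub_one_self_nonneg k]

theorem summable_pow_natAbs {ρ : ℝ} (hρ0 : 0 ≤ ρ) (hρ1 : ρ < 1) :
    Summable fun r : ℤ => ρ ^ r.natAbs := by
  have h := summable_geometric_of_lt_one hρ0 hρ1
  exact .of_nat_of_neg (by simpa using h) (by simpa using h)

theorem summable_zpow_triangle_mul_pow_natAbs {t : ℝ} (ht0 : 0 < t) (ht1 : t < 1) (R : ℝ) :
    Summable fun r : ℤ => t ^ (r * (r - 1) / 2) * R ^ r.natAbs := by
  -- the exponent is quadratic in `r`, so it dominates any geometric factor `|R| ^ |r|`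
  obtain ⟨k, hk⟩ := exists_pow_lt_of_lt_one (inv_pos.mpr (by positivity : 0 < |R| + 1)) ht1
  have hρ : t ^ k * |R| < 1 := by
    have h : t ^ k * (|R| + 1) < 1 := by rwa [← lt_div_iff₀ (by positivity), one_div]
    nlinarith [pow_pos ht0 k]
  refine .of_norm_bounded ((summable_pow_natAbs (by positivity) hρ).mul_left (t ^ (-(k : ℤ) ^ 2)))
    fun r => ?_
  calc ‖t ^ (r * (r - 1) / 2) * R ^ r.natAbs‖ = t ^ (r * (r - 1) / 2) * |R| ^ r.natAbs := by
        rw [norm_mul, norm_pow, Real.norm_eq_abs, Real.norm_eq_abs, abs_of_pos (zpow_pos ht0 _)]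
    _ ≤ t ^ ((k : ℤ) * r.natAbs - (k : ℤ) ^ 2) * |R| ^ r.natAbs := by
        gcongr ?_ * _
        exact zpow_le_zpow_right_of_le_one₀ ht0 ht1.le (mul_natAbs_sub_sq_le_triangle k r)
    _ = t ^ (-(k : ℤ) ^ 2) * (t ^ k * |R|) ^ r.natAbs := by
        rw [sub_eq_neg_add, zpow_add₀ ht0.ne', mul_comm (k : ℤ), zpow_mul, zpow_natCast,
          zpow_natCast, mul_pow]
        ring

theorem norm_zpow_le_pow_natAbs {u : ℂ} {R : ℝ} (h : ‖u‖ ≤ R) (hinv : ‖u‖⁻¹ ≤ R) (r : ℤ) :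
    ‖u ^ r‖ ≤ R ^ r.natAbs := by
  rcases Int.natAbs_eq r with hr | hr <;> rw [hr, norm_zpow]
  · rw [zpow_natCast, Int.natAbs_natCast]; exact pow_le_pow_left₀ (norm_nonneg u) h _
  · rw [zpow_neg, zpow_natCast, ← inv_pow, Int.natAbs_neg, Int.natAbs_natCast]
    exact pow_le_pow_left₀ (by positivity) hinv _

theorem one_le_norm_one_add_ofReal_mul {c : ℝ} (hc : 0 ≤ c) {u : ℂ} (hu : 0 ≤ u.re) :
    1 ≤ ‖1 + c * u‖ :=
  calc (1 : ℝ) ≤ (1 + c * u).re := by simp; positivity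
    _ ≤ ‖1 + c * u‖ := Complex.re_le_norm _

theorem norm_bounds_of_mem_ball_one {u : ℂ} (hu : u ∈ Metric.ball (1 : ℂ) 2⁻¹) :
    0 ≤ u.re ∧ ‖u‖ ≤ 2 ∧ ‖u‖⁻¹ ≤ 2 := by
  rw [Metric.mem_ball, dist_eq_norm] at hu
  have hre : |u.re - 1| < 2⁻¹ := (Complex.abs_re_le_norm (u - 1)).trans_lt (by simpa using hu)
  have hlo : 1 - ‖1 - u‖ ≤ ‖u‖ := by simpa using norm_sub_norm_le (1 : ℂ) (1 - u)
  rw [norm_sub_rev] at hlo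
  have hhi : ‖u‖ ≤ 1 + ‖u - 1‖ := by simpa using norm_le_norm_add_norm_sub' u 1
  refine ⟨by linarith [abs_lt.mp hre], by linarith, ?_⟩
  rw [inv_le_comm₀ (by linarith) two_pos]; linarith

section RealParameters

variable {t a : ℝ}

theorem one_le_norm_appellTerm_denom (ht : 0 < t) (ha : 0 < a) (r : ℤ) {u : ℂ} (hu : 0 ≤ u.re) :
    1 ≤ ‖1 - (t : ℂ) ^ (r - 1) * -(a : ℂ) * u‖ := by
  have h := one_le_norm_one_add_ofReal_mul (c := t ^ (r - 1) * a) (by positivity) hu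
  push_cast at h
  convert h using 2; ring

theorem norm_appellTerm_le (ht0 : 0 < t) (ha : 0 < a) (r : ℤ) {u : ℂ}
    (hu : u ∈ Metric.ball (1 : ℂ) 2⁻¹) :
    ‖appellTerm (-a) u t r‖ ≤ t ^ (r * (r - 1) / 2) * 2 ^ r.natAbs := by
  obtain ⟨hre, hle, hinv⟩ := norm_bounds_of_mem_ball_one hu
  rw [appellTerm, norm_div, norm_mul, norm_mul, norm_zpow, norm_zpow, norm_neg, norm_one, one_zpow,
    one_mul, Complex.norm_real, Real.norm_of_nonneg ht0.le]
  refine div_le_of_le_mul₀ (norm_nonneg _) (by positivity) ?_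
  calc t ^ (r * (r - 1) / 2) * ‖u ^ r‖ ≤ t ^ (r * (r - 1) / 2) * 2 ^ r.natAbs * 1 := by
        rw [mul_one]; gcongr; exact norm_zpow_le_pow_natAbs hle hinv r
    _ ≤ _ := by gcongr; exact one_le_norm_appellTerm_denom ht0 ha r hre

theorem continuousAt_tsum_appellTerm (ht0 : 0 < t) (ht1 : t < 1) (ha : 0 < a) :
    ContinuousAt (fun u => ∑' r, appellTerm (-a) u t r) 1 := by
  refine (continuousOn_tsum (fun r => ?_) (summable_zpow_triangle_mul_pow_natAbs ht0 ht1 2)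
    fun r u hu => norm_appellTerm_le ht0 ha r hu).continuousAt
    (Metric.ball_mem_nhds 1 (by norm_num))
  intro u hu
  have hre := (norm_bounds_of_mem_ball_one hu).1
  have hu0 : u ≠ 0 ∨ 0 ≤ r := .inl <| by rintro rfl; norm_num [Metric.mem_ball] at hu
  have hden : 1 - (t : ℂ) ^ (r - 1) * -(a : ℂ) * u ≠ 0 := fun h => by
    have := one_le_norm_appellTerm_denom ht0 ha r hre
    rw [h, norm_zero] at this
    norm_num at this
  refine ContinuousAt.continuousWithinAt ?_
  unfold appellTerm
  exact .div (by fun_prop (disch := assumption)) (by fun_prop) hden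

end RealParameters

theorem neg_one_zpow_one_sub {α : Type*} [DivisionRing α] (r : ℤ) :
    (-1 : α) ^ (1 - r) = -(-1) ^ r := by
  simp only [neg_one_zpow_eq_ite, Int.even_sub, Int.not_even_one, false_iff]
  split_ifs <;> simp

theorem one_sub_mul_one_sub_sub_one_div_two (r : ℤ) :
    (1 - r) * (1 - r - 1) / 2 = r * (r - 1) / 2 := by
  ring_nf

theorem tsum_neg_one_zpow_mul_zpow_triangle (Q : ℂ) :
    ∑' r : ℤ, (-1) ^ r * Q ^ (r * (r - 1) / 2) = 0 := by
  set f : ℤ → ℂ := fun r => (-1) ^ r * Q ^ (r * (r - 1) / 2)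
  have hf : ∀ r, f (Equiv.subLeft 1 r) = -f r := fun r => by
    simp only [f, Equiv.subLeft_apply, one_sub_mul_one_sub_sub_one_div_two, neg_one_zpow_one_sub,
      neg_mul]
  have h := (Equiv.subLeft (1 : ℤ)).tsum_eq f
  rw [tsum_congr hf, tsum_neg] at h
  exact self_eq_neg.mp h.symm

theorem appellTerm_one_eq_reflect_add {x y Q : ℂ} (hQ : Q ≠ 0) (hxy : x * y = Q) {r : ℤ}
    (hr : Q ^ (r - 1) * y ≠ 1) :
    appellTerm y 1 Q r = appellTerm x 1 Q (1 - r) + (-1) ^ r * Q ^ (r * (r - 1) / 2) := by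
  simp only [appellTerm, one_zpow, mul_one]
  set w := Q ^ (r - 1) * y
  have hw0 : w ≠ 0 := mul_ne_zero (zpow_ne_zero _ hQ) (right_ne_zero_of_mul (hxy ▸ hQ))
  have hx : Q ^ (1 - r - 1) * x = w⁻¹ := by
    refine eq_inv_of_mul_eq_one_left ?_
    calc Q ^ (1 - r - 1) * x * w = Q ^ (1 - r - 1 + (r - 1)) * (x * y) := by
          rw [zpow_add₀ hQ]; ring
      _ = 1 := by rw [hxy, show 1 - r - 1 + (r - 1) = -1 by ring, zpow_neg_one, inv_mul_cancel₀ hQ]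
  have h1 : 1 - w ≠ 0 := sub_ne_zero.mpr (Ne.symm hr)
  have h2 : 1 - w⁻¹ ≠ 0 := sub_ne_zero.mpr (Ne.symm (inv_ne_one.mpr hr))
  rw [one_sub_mul_one_sub_sub_one_div_two, neg_one_zpow_one_sub, hx]
  field_simp
  ring

theorem summable_neg_one_zpow_mul_zpow_triangle {Q : ℂ} (hQ0 : Q ≠ 0) (hQ1 : ‖Q‖ < 1) :
    Summable fun r : ℤ => (-1) ^ r * Q ^ (r * (r - 1) / 2) := by
  refine .of_norm_bounded (summable_zpow_triangle_mul_pow_natAbs (norm_pos_iff.mpr hQ0) hQ1 1)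
    fun r => ?_
  simp [norm_zpow]

theorem tsum_appellTerm_one_eq_of_mul_eq {x y Q : ℂ} (hQ0 : Q ≠ 0) (hQ1 : ‖Q‖ < 1)
    (hxy : x * y = Q) (hy : ∀ n : ℤ, Q ^ n * y ≠ 1) (hx : Summable (appellTerm x 1 Q)) :
    ∑' r, appellTerm y 1 Q r = ∑' r, appellTerm x 1 Q r := by
  have hx' : Summable fun r => appellTerm x 1 Q (1 - r) :=
    (Equiv.subLeft (1 : ℤ)).summable_iff.mpr hx
  rw [tsum_congr fun r => appellTerm_one_eq_reflect_add hQ0 hxy (hy (r - 1)),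
    hx'.tsum_add (summable_neg_one_zpow_mul_zpow_triangle hQ0 hQ1),
    tsum_neg_one_zpow_mul_zpow_triangle, add_zero]
  exact (Equiv.subLeft (1 : ℤ)).tsum_eq (appellTerm x 1 Q)

theorem tendsto_jtheta_mul_appell_sub {t a b : ℝ} (ht0 : 0 < t) (ht1 : t < 1) (ha : 0 < a)
    (hb : 0 < b) (hab : a * b = t) :
    Tendsto (fun u => jtheta u t * (appell (-a) u t - appell (-b) u t))
      (𝓝[{u | ∀ n : ℤ, u ≠ (t : ℂ) ^ n}] 1) (𝓝 0) := by
  have ht : ‖(t : ℂ)‖ < 1 := by rwa [Complex.norm_real, Real.norm_of_nonneg ht0.le]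
  have hval : ∑' r, appellTerm (-b) 1 t r = ∑' r, appellTerm (-a) 1 t r := by
    refine tsum_appellTerm_one_eq_of_mul_eq (by exact_mod_cast ht0.ne') ht
      (by rw [← hab]; push_cast; ring) (fun n h => ?_)
      (.of_norm_bounded (summable_zpow_triangle_mul_pow_natAbs ht0 ht1 2)
        fun r => norm_appellTerm_le ht0 ha r (Metric.mem_ball_self (by norm_num)))
    norm_cast at h
    nlinarith [zpow_pos ht0 n]
  have hlim : Tendsto (fun u => ∑' r, appellTerm (-a) u t r - ∑' r, appellTerm (-b) u t r)
      (𝓝 1) (𝓝 0) := by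
    have h := (continuousAt_tsum_appellTerm ht0 ht1 ha).tendsto.sub
      (continuousAt_tsum_appellTerm ht0 ht1 hb).tendsto
    rwa [hval, sub_self] at h
  refine (hlim.mono_left nhdsWithin_le_nhds).congr' (eventually_nhdsWithin_of_forall fun u hu => ?_)
  exact (jtheta_mul_appell_sub (jtheta_ne_zero ht hu)).symm

theorem tendsto_neg_sq_nhdsWithin_I (q : ℂ) (k : ℕ) :
    Tendsto (fun z : ℂ => -z ^ 2) (𝓝[{z | ∀ n : ℤ, z ^ 2 ≠ q ^ n ∧ z ^ 2 ≠ -q ^ n}] Complex.I)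
      (𝓝[{u | ∀ n : ℤ, u ≠ (q ^ k) ^ n}] 1) := by
  refine tendsto_nhdsWithin_iff.mpr ⟨?_, eventually_nhdsWithin_of_forall fun z hz n h => ?_⟩
  · exact ((continuous_pow 2).neg.tendsto' _ _ (by simp)).mono_left nhdsWithin_le_nhds
  · refine (hz (k * n)).2 ?_
    rw [zpow_mul, zpow_natCast]
    linear_combination -h

theorem tendsto_jtheta_mul_appell_sub_at_I {q : ℝ} (hq0 : 0 < q) (hq1 : q < 1) {k l : ℕ}
    (hkl : k + l = 12) :
    Tendsto
        (fun z : ℂ =>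
          jtheta (-z ^ 2) ((q : ℂ) ^ 12) *
            (appell (-(q : ℂ) ^ k) (-z ^ 2) ((q : ℂ) ^ 12) -
              appell (-(q : ℂ) ^ l) (-z ^ 2) ((q : ℂ) ^ 12)))
        (𝓝[{z : ℂ | ∀ n : ℤ, z ^ 2 ≠ (q : ℂ) ^ n ∧ z ^ 2 ≠ -(q : ℂ) ^ n}] Complex.I) (𝓝 0) := by
  have h := tendsto_jtheta_mul_appell_sub (pow_pos hq0 12) (pow_lt_one₀ hq0.le hq1 (by norm_num))
    (pow_pos hq0 k) (pow_pos hq0 l) (by rw [← pow_add, hkl])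
  push_cast at h
  exact h.comp (tendsto_neg_sq_nhdsWithin_I q 12)

/-- Vanishing limits of Appell-function combinations as `z → i`. -/
theorem appell_limit_at_I (q : ℝ) (hq0 : 0 < q) (hq1 : q < 1) :
    Filter.Tendsto
        (fun z : ℂ =>
          jtheta (-z ^ 2) ((q : ℂ) ^ 12) *
            (appell (-(q : ℂ) ^ 8) (-z ^ 2) ((q : ℂ) ^ 12) -
              appell (-(q : ℂ) ^ 4) (-z ^ 2) ((q : ℂ) ^ 12)))
        (nhdsWithin Complex.I
          {z : ℂ | ∀ n : ℤ, z ^ 2 ≠ (q : ℂ) ^ n ∧ z ^ 2 ≠ -(q : ℂ) ^ n})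
        (nhds 0) ∧
    Filter.Tendsto
        (fun z : ℂ =>
          jtheta (-z ^ 2) ((q : ℂ) ^ 12) *
            (appell (-(q : ℂ) ^ 10) (-z ^ 2) ((q : ℂ) ^ 12) -
              appell (-(q : ℂ) ^ 2) (-z ^ 2) ((q : ℂ) ^ 12)))
        (nhdsWithin Complex.I
          {z : ℂ | ∀ n : ℤ, z ^ 2 ≠ (q : ℂ) ^ n ∧ z ^ 2 ≠ -(q : ℂ) ^ n})
        (nhds 0) :=
  ⟨tendsto_jtheta_mul_appell_sub_at_I hq0 hq1 (by norm_num),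
    tendsto_jtheta_mul_appell_sub_at_I hq0 hq1 (by norm_num)⟩
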